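/- Let p be a prime, n ≥ 1, α > 0, N ∈ ℤ, Ω = B_N ⊆ ℚ_p^n. Let F be a set of measurable functions f : Ω → ℝ such that sup_{f∈F} ∫_Ω f² dx < ∞ and sup_{f∈F} ∬_{Ω×Ω} |f(x)−f(y)|²/‖x−y‖^{n+α} dx dy < ∞. Then F is totally bounded in L²(Ω): for every ε > 0 there exist finitely many β_1, …, β_M ∈ L²(Ω) such that every f ∈ F satisfies ‖f − β_j‖_{L²(Ω)} ≤ ε for some j ∈ {1,…,M}. In particular F is precompact in L²(Ω). -/

import Mathlib

noncomputable section

open MeasureTheory Metric ENNReal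

instance (p : ℕ) [Fact p.Prime] : MeasurableSpace ℚ_[p] := borel _
instance (p : ℕ) [Fact p.Prime] : BorelSpace ℚ_[p] := ⟨rfl⟩

/-- The closed unit ball `ℤ_p ⊆ ℚ_p` as a positive compact set. -/
def padicUnitBall (p : ℕ) [Fact p.Prime] : TopologicalSpace.PositiveCompacts ℚ_[p] where
  carrier := Metric.closedBall 0 1
  isCompact' := isCompact_closedBall 0 1
  interior_nonempty' := by
    rw [IsOpen.interior_eq (IsUltrametricDist.isOpen_closedBall 0 one_ne_zero)]
    exact ⟨0, Metric.mem_closedBall_self zero_le_one⟩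

/-- Additive Haar measure on `ℚ_p`, normalized so that `ℤ_p` has measure `1`. -/
def padicHaar (p : ℕ) [Fact p.Prime] : Measure ℚ_[p] :=
  Measure.addHaarMeasure (padicUnitBall p)

/-- The product Haar measure on `K^n = ℚ_p^n`, normalized so that `ℤ_p^n` has measure `1`. -/
def padicHaarN (p : ℕ) [Fact p.Prime] (n : ℕ) : Measure (Fin n → ℚ_[p]) :=
  Measure.pi fun _ => padicHaar p

/-- The ball `B_N = {x ∈ K^n : ‖x‖ ≤ p^N}`, where `‖x‖ = max |x_j|_p` is the sup norm. -/
def Bball (p : ℕ) [Fact p.Prime] (n : ℕ) (N : ℤ) : Set (Fin n → ℚ_[p]) :=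
  {x | ‖x‖ ≤ (p : ℝ) ^ N}

/-- The constant `c_{n,α} = (p^α − 1)/(1 − p^{−α−n})`. -/
def cna (p n : ℕ) (α : ℝ) : ℝ := ((p : ℝ) ^ α - 1) / (1 - (p : ℝ) ^ (-α - (n : ℝ)))

/-- The Vladimirov–Taibleson operator `(D^{α,n}u)(x) = c_{n,α} ∫ (u(x)−u(y))/‖x−y‖^{n+α} dy`. -/
def Dop (p : ℕ) [Fact p.Prime] (n : ℕ) (α : ℝ) (u : (Fin n → ℚ_[p]) → ℝ)
    (x : Fin n → ℚ_[p]) : ℝ :=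
  cna p n α * ∫ y, (u x - u y) / ‖x - y‖ ^ ((n : ℝ) + α) ∂padicHaarN p n

/-- The nonlocal normal derivative `(N_α u)(x) = c_{n,α} ∫_Ω (u(x)−u(y))/‖x−y‖^{n+α} dy`. -/
def Nop (p : ℕ) [Fact p.Prime] (n : ℕ) (α : ℝ) (N : ℤ) (u : (Fin n → ℚ_[p]) → ℝ)
    (x : Fin n → ℚ_[p]) : ℝ :=
  cna p n α * ∫ y in Bball p n N, (u x - u y) / ‖x - y‖ ^ ((n : ℝ) + α) ∂padicHaarN p n

variable (p : ℕ) [Fact p.Prime] (n : ℕ)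

instance : (padicHaar p).IsAddHaarMeasure :=
  Measure.isAddHaarMeasure_addHaarMeasure _
instance : SigmaFinite (padicHaar p) := by unfold padicHaar; infer_instance
instance : SigmaFinite (padicHaarN p n) := by unfold padicHaarN; infer_instance
instance : (padicHaarN p n).IsAddLeftInvariant := by unfold padicHaarN; infer_instance
instance : IsUltrametricDist (Fin n → ℚ_[p]) := by
  constructor
  intro x y z
  refine dist_pi_le_iff (le_max_of_le_left dist_nonneg) |>.mpr fun i => ?_
  exact (dist_triangle_max (x i) (y i) (z i)).trans
    (max_le_max (dist_le_pi_dist x y i) (dist_le_pi_dist y z i))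

lemma padicHaar_cb_translate (a : ℚ_[p]) (r : ℝ) :
    padicHaar p (closedBall a r) = padicHaar p (closedBall 0 r) := by
  have : closedBall a r = (fun x => -a + x) ⁻¹' closedBall (0:ℚ_[p]) r := by
    ext x
    simp [mem_closedBall, dist_eq_norm, neg_add_eq_sub]
  rw [this, measure_preimage_add]

lemma padicHaarN_cb_translate (a : Fin n → ℚ_[p]) (r : ℝ) :
    padicHaarN p n (closedBall a r) = padicHaarN p n (closedBall 0 r) := by
  have : closedBall a r = (fun x => -a + x) ⁻¹' closedBall (0:Fin n → ℚ_[p]) r := by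
    ext x
    simp [mem_closedBall, dist_eq_norm, neg_add_eq_sub]
  rw [this, measure_preimage_add]

lemma padic_unit_cover (m : ℕ) :
    closedBall (0:ℚ_[p]) 1 ⊆
      ⋃ a ∈ Finset.range (p^m), closedBall ((a:ℚ_[p])) ((p:ℝ)^(-(m:ℤ))) := by
  intro z hz
  have hz1 : ‖z‖ ≤ 1 := by simpa [dist_zero_right] using hz
  set z' : ℤ_[p] := ⟨z, hz1⟩ with hz'
  have ha : z'.appr m < p ^ m := PadicInt.appr_lt z' m
  have hnorm : ‖z' - (z'.appr m : ℤ_[p])‖ ≤ (p:ℝ)^(-(m:ℤ)) :=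
    (PadicInt.norm_le_pow_iff_mem_span_pow _ m).mpr (PadicInt.appr_spec m z')
  refine Set.mem_biUnion (Finset.mem_range.mpr ha) ?_
  have : ‖z - ((z'.appr m : ℕ) : ℚ_[p])‖ ≤ (p:ℝ)^(-(m:ℤ)) := by
    have := hnorm
    rwa [PadicInt.norm_def, PadicInt.coe_sub, PadicInt.coe_natCast] at this
  simpa [mem_closedBall, dist_eq_norm] using this

lemma padicHaar_small_ball_lb (m : ℕ) :
    ((p:ℝ≥0∞)^m)⁻¹ ≤ padicHaar p (closedBall 0 ((p:ℝ)^(-(m:ℤ)))) := by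
  have h1 : (1:ℝ≥0∞) = padicHaar p (closedBall 0 1) := Measure.addHaarMeasure_self.symm
  have hcover := padic_unit_cover p m
  have hle : (1:ℝ≥0∞) ≤ (p^m : ℕ) * padicHaar p (closedBall 0 ((p:ℝ)^(-(m:ℤ)))) := by
    calc (1:ℝ≥0∞) = padicHaar p (closedBall 0 1) := h1
      _ ≤ padicHaar p (⋃ a ∈ Finset.range (p^m), closedBall ((a:ℚ_[p])) ((p:ℝ)^(-(m:ℤ)))) :=
          measure_mono hcover
      _ ≤ ∑ a ∈ Finset.range (p^m), padicHaar p (closedBall ((a:ℚ_[p])) ((p:ℝ)^(-(m:ℤ)))) :=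
          measure_biUnion_finset_le _ _
      _ = ∑ _a ∈ Finset.range (p^m), padicHaar p (closedBall 0 ((p:ℝ)^(-(m:ℤ)))) := by
          refine Finset.sum_congr rfl fun a _ => padicHaar_cb_translate p _ _
      _ = (p^m : ℕ) * padicHaar p (closedBall 0 ((p:ℝ)^(-(m:ℤ)))) := by
          simp [Finset.sum_const, mul_comm]
  have hp0 : ((p:ℝ≥0∞)^m) ≠ 0 :=
    pow_ne_zero _ (by exact_mod_cast (Fact.out : p.Prime).ne_zero)
  have hpt : ((p:ℝ≥0∞)^m) ≠ ⊤ := by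
    exact pow_ne_top (natCast_ne_top p)
  calc ((p:ℝ≥0∞)^m)⁻¹ = ((p:ℝ≥0∞)^m)⁻¹ * 1 := (mul_one _).symm
    _ ≤ ((p:ℝ≥0∞)^m)⁻¹ * ((p^m : ℕ) * padicHaar p (closedBall 0 ((p:ℝ)^(-(m:ℤ))))) :=
        mul_le_mul_right hle _
    _ = padicHaar p (closedBall 0 ((p:ℝ)^(-(m:ℤ)))) := by
        push_cast
        rw [← mul_assoc, ENNReal.inv_mul_cancel hp0 hpt, one_mul]

lemma padicHaarN_cb_eq_pow (r : ℝ) (hr : 0 ≤ r) :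
    padicHaarN p n (closedBall 0 r) = (padicHaar p (closedBall 0 r))^n := by
  rw [closedBall_pi _ hr]
  unfold padicHaarN
  rw [Measure.pi_pi]
  simp [Finset.prod_const]

lemma padicHaarN_small_ball_lb (m : ℕ) :
    ((p:ℝ≥0∞)^(m*n))⁻¹ ≤ padicHaarN p n (closedBall 0 ((p:ℝ)^(-(m:ℤ)))) := by
  rw [padicHaarN_cb_eq_pow p n _ (zpow_nonneg (by positivity) _)]
  have h := padicHaar_small_ball_lb p m
  calc ((p:ℝ≥0∞)^(m*n))⁻¹ = (((p:ℝ≥0∞)^m)⁻¹)^n := by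
        rw [← ENNReal.inv_pow, ← pow_mul]
    _ ≤ (padicHaar p (closedBall 0 ((p:ℝ)^(-(m:ℤ)))))^n := by gcongr

lemma padicHaarN_small_ball_ub (m : ℕ) :
    padicHaarN p n (closedBall 0 ((p:ℝ)^(-(m:ℤ)))) ≤ 1 := by
  rw [padicHaarN_cb_eq_pow p n _ (zpow_nonneg (by positivity) _)]
  have h1 : padicHaar p (closedBall 0 ((p:ℝ)^(-(m:ℤ)))) ≤ 1 := by
    have hself : padicHaar p (closedBall 0 1) = 1 := Measure.addHaarMeasure_self
    rw [← hself]
    exact measure_mono (closedBall_subset_closedBall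
      (zpow_le_one_of_nonpos₀ (by exact_mod_cast (Fact.out : p.Prime).one_lt.le) (by simp)))
  exact pow_le_one' h1 n

lemma Bball_eq (N : ℤ) : Bball p n N = closedBall 0 ((p:ℝ)^N) := by
  ext x
  simp [Bball, mem_closedBall, dist_zero_right]

lemma Bball_meas (N : ℤ) : MeasurableSet (Bball p n N) := by
  rw [Bball_eq]; exact measurableSet_closedBall

lemma Bball_lt_top (N : ℤ) : padicHaarN p n (Bball p n N) < ⊤ := by
  rw [Bball_eq, padicHaarN_cb_eq_pow p n _ (zpow_nonneg (by positivity) _)]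
  exact ENNReal.pow_lt_top ((isCompact_closedBall (0:ℚ_[p]) _).measure_lt_top)

lemma ennnorm_sq (a : ℝ) : (‖a‖₊ : ℝ≥0∞)^2 = ENNReal.ofReal (a^2) := by
  rw [show (‖a‖₊ : ℝ≥0∞) = ‖a‖ₑ from rfl, Real.enorm_eq_ofReal_abs, ← ENNReal.ofReal_pow (abs_nonneg a), sq_abs]

lemma ennnorm_rpow_two (a : ℝ) : (‖a‖₊ : ℝ≥0∞)^(2:ℝ) = ENNReal.ofReal (a^2) := by
  rw [← ennnorm_sq, ← ENNReal.rpow_natCast (‖a‖₊ : ℝ≥0∞) 2]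
  norm_num

section CS
variable {E : Type*} [MeasurableSpace E]

lemma lintegral_cs (ν : Measure E) [IsFiniteMeasure ν] (g : E → ℝ)
    (hg : AEStronglyMeasurable g ν) :
    (∫⁻ y, (‖g y‖₊ : ℝ≥0∞) ∂ν) ^ 2 ≤ (∫⁻ y, ENNReal.ofReal ((g y)^2) ∂ν) * ν Set.univ := by
  set Q := ∫⁻ y, ENNReal.ofReal ((g y)^2) ∂ν with hQ
  have h1 : ∫⁻ y, (‖g y‖₊ : ℝ≥0∞) ∂ν = eLpNorm g 1 ν := by
    rw [eLpNorm_one_eq_lintegral_enorm]; rfl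
  have h2 : eLpNorm g 2 ν = Q ^ (1/2 : ℝ) := by
    rw [eLpNorm_eq_lintegral_rpow_enorm_toReal (two_ne_zero) (by norm_num)]
    congr 1
    · refine lintegral_congr fun y => ?_
      rw [ENNReal.toReal_ofNat]; exact ennnorm_rpow_two _
  have h3 : eLpNorm g 1 ν ≤ eLpNorm g 2 ν * ν Set.univ ^ (1/(1:ℝ≥0∞).toReal - 1/(2:ℝ≥0∞).toReal) :=
    eLpNorm_le_eLpNorm_mul_rpow_measure_univ (by norm_num) hg
  have h4 : (1/(1:ℝ≥0∞).toReal - 1/(2:ℝ≥0∞).toReal) = (1/2 : ℝ) := by norm_num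
  rw [h1]
  calc (eLpNorm g 1 ν)^2 ≤ (Q ^ (1/2:ℝ) * ν Set.univ ^ (1/2:ℝ))^2 := by
        rw [← h2, ← h4]; exact pow_le_pow_left' h3 2
    _ = (Q ^ (1/2:ℝ))^2 * (ν Set.univ ^ (1/2:ℝ))^2 := mul_pow _ _ 2
    _ = Q * ν Set.univ := by
        rw [← ENNReal.rpow_natCast (Q ^ (1/2:ℝ)) 2, ← ENNReal.rpow_natCast (ν Set.univ ^ (1/2:ℝ)) 2,
          ← ENNReal.rpow_mul, ← ENNReal.rpow_mul]
        norm_num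
end CS

lemma real_net (R δ : ℝ) (hR : 0 ≤ R) (hδ : 0 < δ) :
    ∃ (L : ℕ) (v : Fin L → ℝ), ∀ t : ℝ, |t| ≤ R → ∃ i, |t - v i| ≤ δ := by
  obtain ⟨T, hTsub, hTfin, hTcover⟩ := (isCompact_Icc (a := -R) (b := R)).finite_cover_balls hδ
  classical
  refine ⟨hTfin.toFinset.card, fun i => ((hTfin.toFinset.equivFin.symm i : hTfin.toFinset) : ℝ), ?_⟩
  intro t ht
  have htmem : t ∈ Set.Icc (-R) R := abs_le.mp ht
  obtain ⟨c, hc, hct⟩ := Set.mem_iUnion₂.mp (hTcover htmem)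
  have hc' : c ∈ hTfin.toFinset := hTfin.mem_toFinset.mpr hc
  refine ⟨hTfin.toFinset.equivFin ⟨c, hc'⟩, ?_⟩
  simp only [Equiv.symm_apply_apply]
  exact le_of_lt (by simpa [Metric.mem_ball, Real.dist_eq] using hct)

lemma cb_subset_Bball (N : ℤ) (m : ℕ) (hmN : -(m:ℤ) ≤ N) (x : Fin n → ℚ_[p])
    (hx : x ∈ Bball p n N) :
    closedBall x ((p:ℝ)^(-(m:ℤ))) ⊆ Bball p n N := by
  have hp1 : (1:ℝ) ≤ (p:ℝ) := by exact_mod_cast (Fact.out : p.Prime).one_lt.le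
  have hr : ((p:ℝ)^(-(m:ℤ))) ≤ (p:ℝ)^N := zpow_le_zpow_right₀ hp1 hmN
  rw [Bball_eq] at hx ⊢
  intro y hy
  rw [mem_closedBall] at hx hy ⊢
  exact (dist_triangle_max y x 0).trans (max_le (hy.trans hr) hx)

/-- The averaging operator at scale `p^{-m}`. -/
def avgOp (p : ℕ) [Fact p.Prime] (n m : ℕ) (f : (Fin n → ℚ_[p]) → ℝ)
    (x : Fin n → ℚ_[p]) : ℝ :=
  (padicHaarN p n (closedBall (0:Fin n → ℚ_[p]) ((p:ℝ)^(-(m:ℤ))))).toReal⁻¹ *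
    ∫ y in closedBall x ((p:ℝ)^(-(m:ℤ))), f y ∂padicHaarN p n

lemma Vm_ne_zero (m : ℕ) :
    padicHaarN p n (closedBall (0:Fin n → ℚ_[p]) ((p:ℝ)^(-(m:ℤ)))) ≠ 0 := by
  refine fun h => ?_
  have := padicHaarN_small_ball_lb p n m
  rw [h, le_zero_iff, ENNReal.inv_eq_zero] at this
  exact (ENNReal.pow_ne_top (natCast_ne_top p)) this

lemma Vm_ne_top (m : ℕ) :
    padicHaarN p n (closedBall (0:Fin n → ℚ_[p]) ((p:ℝ)^(-(m:ℤ)))) ≠ ⊤ := by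
  intro h
  have h2 := padicHaarN_small_ball_ub p n m
  rw [h] at h2
  exact absurd h2 (by simp)

lemma Vm_pos (m : ℕ) :
    0 < (padicHaarN p n (closedBall (0:Fin n → ℚ_[p]) ((p:ℝ)^(-(m:ℤ))))).toReal :=
  ENNReal.toReal_pos (Vm_ne_zero p n m) (Vm_ne_top p n m)

lemma avg_pointwise (m : ℕ) (f : (Fin n → ℚ_[p]) → ℝ) (hf : Measurable f)
    (x : Fin n → ℚ_[p])
    (hint : IntegrableOn f (closedBall x ((p:ℝ)^(-(m:ℤ)))) (padicHaarN p n)) :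
    ENNReal.ofReal ((f x - avgOp p n m f x)^2)
      ≤ (padicHaarN p n (closedBall (0:Fin n → ℚ_[p]) ((p:ℝ)^(-(m:ℤ)))))⁻¹ *
        ∫⁻ y in closedBall x ((p:ℝ)^(-(m:ℤ))),
          ENNReal.ofReal ((f x - f y)^2) ∂padicHaarN p n := by
  set r : ℝ := (p:ℝ)^(-(m:ℤ)) with hrdef
  set μ := padicHaarN p n with hμdef
  set B : Set (Fin n → ℚ_[p]) := closedBall x r with hBdef
  have hVB : μ B = μ (closedBall (0:Fin n → ℚ_[p]) r) := padicHaarN_cb_translate p n x r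
  set VB : ℝ≥0∞ := μ (closedBall (0:Fin n → ℚ_[p]) r) with hVBdef
  have hV0 : VB ≠ 0 := Vm_ne_zero p n m
  have hVt : VB ≠ ⊤ := Vm_ne_top p n m
  set V : ℝ := VB.toReal with hVdef
  have hVpos : 0 < V := Vm_pos p n m
  haveI : IsFiniteMeasure (μ.restrict B) :=
    ⟨by rw [Measure.restrict_apply_univ, hVB]; exact hVt.lt_top⟩
  set I : ℝ := ∫ y in B, (f x - f y) ∂μ with hIdef
  have hI : f x - avgOp p n m f x = V⁻¹ * I := by
    have hsub : I = V * f x - ∫ y in B, f y ∂μ := by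
      rw [hIdef, integral_sub (integrableOn_const (C := f x) (s := B) (μ := μ) (by rw [hVB]; exact hVt))
        hint]
      rw [setIntegral_const, measureReal_def, hVB]
      simp [smul_eq_mul, hVdef]
    rw [avgOp, ← hrdef, ← hμdef, ← hBdef, ← hVBdef, ← hVdef, hsub]
    field_simp
  have hofV : ENNReal.ofReal V⁻¹ = VB⁻¹ := by
    rw [ENNReal.ofReal_inv_of_pos hVpos, ENNReal.ofReal_toReal hVt]
  have hCS := lintegral_cs (μ.restrict B) (fun y => f x - f y)
    ((measurable_const.sub hf).aestronglyMeasurable)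
  rw [Measure.restrict_apply_univ, hVB] at hCS
  have hnormI : (‖I‖₊ : ℝ≥0∞) ≤ ∫⁻ y in B, (‖f x - f y‖₊ : ℝ≥0∞) ∂μ :=
    enorm_integral_le_lintegral_enorm _
  calc ENNReal.ofReal ((f x - avgOp p n m f x)^2)
      = ENNReal.ofReal (V⁻¹^2 * I^2) := by rw [hI, mul_pow]
    _ = (ENNReal.ofReal V⁻¹)^2 * ENNReal.ofReal (I^2) := by
        rw [ENNReal.ofReal_mul (by positivity), ENNReal.ofReal_pow (by positivity)]
    _ = VB⁻¹^2 * (‖I‖₊ : ℝ≥0∞)^2 := by rw [hofV, ennnorm_sq]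
    _ ≤ VB⁻¹^2 * (∫⁻ y in B, (‖f x - f y‖₊ : ℝ≥0∞) ∂μ)^2 := by gcongr
    _ ≤ VB⁻¹^2 * ((∫⁻ y in B, ENNReal.ofReal ((f x - f y)^2) ∂μ) * VB) := by gcongr
    _ = (VB⁻¹ * VB) * (VB⁻¹ * ∫⁻ y in B, ENNReal.ofReal ((f x - f y)^2) ∂μ) := by ring
    _ = VB⁻¹ * ∫⁻ y in B, ENNReal.ofReal ((f x - f y)^2) ∂μ := by
        rw [ENNReal.inv_mul_cancel hV0 hVt, one_mul]

lemma avg_L2_bound (N : ℤ) (m : ℕ) (hmN : -(m:ℤ) ≤ N) (α : ℝ) (hα : 0 < α)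
    (f : (Fin n → ℚ_[p]) → ℝ) (hf : Measurable f)
    (hint : ∀ x ∈ Bball p n N,
      IntegrableOn f (closedBall x ((p:ℝ)^(-(m:ℤ)))) (padicHaarN p n)) :
    ∫⁻ x in Bball p n N, ENNReal.ofReal ((f x - avgOp p n m f x)^2) ∂padicHaarN p n
      ≤ (padicHaarN p n (closedBall (0:Fin n → ℚ_[p]) ((p:ℝ)^(-(m:ℤ)))))⁻¹
        * ENNReal.ofReal (((p:ℝ)^(-(m:ℤ)))^((n:ℝ)+α))
        * ∫⁻ z in (Bball p n N) ×ˢ (Bball p n N),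
            ENNReal.ofReal ((f z.1 - f z.2)^2 / ‖z.1 - z.2‖^((n:ℝ)+α))
            ∂((padicHaarN p n).prod (padicHaarN p n)) := by
  set r : ℝ := (p:ℝ)^(-(m:ℤ)) with hrdef
  have hr0 : 0 < r := zpow_pos (by exact_mod_cast (Fact.out : p.Prime).pos) _
  have hna : 0 < (n:ℝ) + α := by positivity
  set μ := padicHaarN p n with hμdef
  set Ω := Bball p n N with hΩdef
  have hΩmeas : MeasurableSet Ω := Bball_meas p n N
  set VB : ℝ≥0∞ := μ (closedBall (0:Fin n → ℚ_[p]) r) with hVBdef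
  have hV0 : VB ≠ 0 := Vm_ne_zero p n m
  have hVt : VB ≠ ⊤ := Vm_ne_top p n m
  set q : (Fin n → ℚ_[p]) × (Fin n → ℚ_[p]) → ℝ≥0∞ :=
    fun z => ENNReal.ofReal ((f z.1 - f z.2)^2 / ‖z.1 - z.2‖^((n:ℝ)+α)) with hqdef
  have hq : Measurable q := by
    apply ENNReal.measurable_ofReal.comp
    apply Measurable.div
    · exact ((hf.comp measurable_fst).sub (hf.comp measurable_snd)).pow_const 2
    · exact (((continuous_fst.sub continuous_snd).norm).rpow_const
        (fun _ => Or.inr hna.le)).measurable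
  set A : (Fin n → ℚ_[p]) → ℝ≥0∞ :=
    fun x => ENNReal.ofReal ((f x - avgOp p n m f x)^2) with hAdef
  set Bd : (Fin n → ℚ_[p]) → ℝ≥0∞ :=
    fun x => VB⁻¹ * (ENNReal.ofReal (r^((n:ℝ)+α)) * ∫⁻ y in Ω, q (x, y) ∂μ) with hBddef
  have key : ∀ x, Ω.indicator A x ≤ Ω.indicator Bd x := by
    intro x
    by_cases hx : x ∈ Ω
    · rw [Set.indicator_of_mem hx, Set.indicator_of_mem hx]
      have hsub : closedBall x r ⊆ Ω := cb_subset_Bball p n N m hmN x hx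
      have step1 := avg_pointwise p n m f hf x (hint x hx)
      refine step1.trans ?_
      rw [hBddef]
      refine mul_le_mul_right ?_ _
      have hcbmeas : MeasurableSet (closedBall x r) := measurableSet_closedBall
      have hiter : ∫⁻ y in closedBall x r, ENNReal.ofReal ((f x - f y)^2) ∂μ
          = ∫⁻ y in Ω, (closedBall x r).indicator
              (fun y => ENNReal.ofReal ((f x - f y)^2)) y ∂μ := by
        rw [lintegral_indicator hcbmeas, Measure.restrict_restrict hcbmeas,
          Set.inter_eq_self_of_subset_left hsub]
      rw [hiter]
      have hpt : ∀ y, (closedBall x r).indicator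
          (fun y => ENNReal.ofReal ((f x - f y)^2)) y
          ≤ ENNReal.ofReal (r^((n:ℝ)+α)) * q (x, y) := by
        intro y
        by_cases hy : y ∈ closedBall x r
        · rw [Set.indicator_of_mem hy, hqdef]
          rw [← ENNReal.ofReal_mul (by positivity)]
          apply ENNReal.ofReal_le_ofReal
          by_cases hxy : x = y
          · subst hxy
            have hz : (f x - f x)^2 = 0 := by ring
            rw [hz]
            positivity
          · have hne : (0:ℝ) < ‖x - y‖ := by
              rw [norm_pos_iff, sub_ne_zero]; exact hxy
            have hle : ‖x - y‖ ≤ r := by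
              rw [mem_closedBall, dist_comm] at hy
              rwa [← dist_eq_norm]
            have hrp : (0:ℝ) < ‖x - y‖^((n:ℝ)+α) := Real.rpow_pos_of_pos hne _
            calc (f x - f y)^2
                = ‖x - y‖^((n:ℝ)+α) * ((f x - f y)^2 / ‖x - y‖^((n:ℝ)+α)) := by
                  field_simp
              _ ≤ r^((n:ℝ)+α) * ((f x - f y)^2 / ‖x - y‖^((n:ℝ)+α)) := by
                  apply mul_le_mul_of_nonneg_right
                    (Real.rpow_le_rpow hne.le hle hna.le) (by positivity)
        · rw [Set.indicator_of_notMem hy]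
          exact zero_le
      calc ∫⁻ y in Ω, (closedBall x r).indicator
            (fun y => ENNReal.ofReal ((f x - f y)^2)) y ∂μ
          ≤ ∫⁻ y in Ω, ENNReal.ofReal (r^((n:ℝ)+α)) * q (x, y) ∂μ :=
            lintegral_mono fun y => hpt y
        _ = ENNReal.ofReal (r^((n:ℝ)+α)) * ∫⁻ y in Ω, q (x, y) ∂μ :=
            lintegral_const_mul' _ _ ENNReal.ofReal_ne_top
    · rw [Set.indicator_of_notMem hx, Set.indicator_of_notMem hx]
  calc ∫⁻ x in Ω, A x ∂μ = ∫⁻ x, Ω.indicator A x ∂μ := (lintegral_indicator hΩmeas _).symm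
    _ ≤ ∫⁻ x, Ω.indicator Bd x ∂μ := lintegral_mono key
    _ = ∫⁻ x in Ω, Bd x ∂μ := lintegral_indicator hΩmeas _
    _ = VB⁻¹ * (ENNReal.ofReal (r^((n:ℝ)+α)) * ∫⁻ x in Ω, ∫⁻ y in Ω, q (x, y) ∂μ ∂μ) := by
        rw [hBddef]
        simp only
        rw [lintegral_const_mul' _ _ (ENNReal.inv_ne_top.mpr hV0),
          lintegral_const_mul' _ _ ENNReal.ofReal_ne_top]
    _ = VB⁻¹ * ENNReal.ofReal (r^((n:ℝ)+α)) * ∫⁻ z in Ω ×ˢ Ω, q z ∂(μ.prod μ) := by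
        rw [← Measure.prod_restrict, lintegral_prod _ hq.aemeasurable, mul_assoc]

lemma avg_locally_const (m : ℕ) (f : (Fin n → ℚ_[p]) → ℝ) (x x' : Fin n → ℚ_[p])
    (h : dist x x' ≤ (p:ℝ)^(-(m:ℤ))) : avgOp p n m f x = avgOp p n m f x' := by
  unfold avgOp
  congr 1
  have hx' : x' ∈ closedBall x ((p:ℝ)^(-(m:ℤ))) := by
    rw [mem_closedBall, dist_comm]; exact h
  rw [IsUltrametricDist.closedBall_eq_of_mem hx']

lemma avg_continuous (m : ℕ) (f : (Fin n → ℚ_[p]) → ℝ) :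
    Continuous (avgOp p n m f) := by
  rw [continuous_iff_continuousAt]
  intro x
  have hr0 : (0:ℝ) < (p:ℝ)^(-(m:ℤ)) := zpow_pos (by exact_mod_cast (Fact.out : p.Prime).pos) _
  have hopen : IsOpen (closedBall x ((p:ℝ)^(-(m:ℤ)))) :=
    IsUltrametricDist.isOpen_closedBall x hr0.ne'
  have hmem : closedBall x ((p:ℝ)^(-(m:ℤ))) ∈ nhds x :=
    hopen.mem_nhds (mem_closedBall_self hr0.le)
  have hev : avgOp p n m f =ᶠ[nhds x] fun _ => avgOp p n m f x :=
    Filter.eventually_of_mem hmem fun y hy =>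
      avg_locally_const p n m f y x (by rwa [mem_closedBall] at hy)
  exact hev.continuousAt

lemma avg_abs_le (m : ℕ) (f : (Fin n → ℚ_[p]) → ℝ) (hf : Measurable f) (C : ℝ) (hC : 0 ≤ C)
    (x : Fin n → ℚ_[p])
    (hbound : ∫⁻ y in closedBall x ((p:ℝ)^(-(m:ℤ))), ENNReal.ofReal ((f y)^2) ∂padicHaarN p n
      ≤ ENNReal.ofReal C) :
    |avgOp p n m f x| ≤
      (padicHaarN p n (closedBall (0:Fin n → ℚ_[p]) ((p:ℝ)^(-(m:ℤ))))).toReal⁻¹ *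
        Real.sqrt (C * (padicHaarN p n (closedBall (0:Fin n → ℚ_[p])
          ((p:ℝ)^(-(m:ℤ))))).toReal) := by
  set r : ℝ := (p:ℝ)^(-(m:ℤ)) with hrdef
  set μ := padicHaarN p n with hμdef
  set B : Set (Fin n → ℚ_[p]) := closedBall x r with hBdef
  set VB : ℝ≥0∞ := μ (closedBall (0:Fin n → ℚ_[p]) r) with hVBdef
  have hVB : μ B = VB := padicHaarN_cb_translate p n x r
  have hV0 : VB ≠ 0 := Vm_ne_zero p n m
  have hVt : VB ≠ ⊤ := Vm_ne_top p n m
  set V : ℝ := VB.toReal with hVdef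
  have hVpos : 0 < V := Vm_pos p n m
  haveI : IsFiniteMeasure (μ.restrict B) :=
    ⟨by rw [Measure.restrict_apply_univ, hVB]; exact hVt.lt_top⟩
  set I : ℝ := ∫ y in B, f y ∂μ with hIdef
  have hCS := lintegral_cs (μ.restrict B) f hf.aestronglyMeasurable
  rw [Measure.restrict_apply_univ, hVB] at hCS
  have hsq : ENNReal.ofReal (|I|^2) ≤ ENNReal.ofReal (C * V) := by
    calc ENNReal.ofReal (|I|^2) = (‖I‖₊ : ℝ≥0∞)^2 := by
          rw [show (‖I‖₊ : ℝ≥0∞) = ‖I‖ₑ from rfl, Real.enorm_eq_ofReal_abs, ← ENNReal.ofReal_pow (abs_nonneg _)]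
      _ ≤ (∫⁻ y in B, (‖f y‖₊ : ℝ≥0∞) ∂μ)^2 := by
          gcongr
          exact enorm_integral_le_lintegral_enorm _
      _ ≤ (∫⁻ y in B, ENNReal.ofReal ((f y)^2) ∂μ) * VB := hCS
      _ ≤ ENNReal.ofReal C * VB := by gcongr
      _ = ENNReal.ofReal (C * V) := by
          rw [ENNReal.ofReal_mul hC, ENNReal.ofReal_toReal hVt]
  have hIsq : |I|^2 ≤ C * V :=
    (ENNReal.ofReal_le_ofReal_iff (by positivity)).mp hsq
  have hIle : |I| ≤ Real.sqrt (C * V) := by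
    rw [← Real.sqrt_sq (abs_nonneg I)]
    exact Real.sqrt_le_sqrt hIsq
  have havg : avgOp p n m f x = V⁻¹ * I := rfl
  rw [havg, abs_mul, abs_of_pos (inv_pos.mpr hVpos)]
  exact mul_le_mul_of_nonneg_left hIle (by positivity)

lemma lintegral_sq_eq {α : Type*} [MeasurableSpace α] (u : α → ℝ) (ν : Measure α) :
    ∫⁻ x, ENNReal.ofReal ((u x)^2) ∂ν = (eLpNorm u 2 ν)^2 := by
  rw [eLpNorm_eq_lintegral_rpow_enorm_toReal two_ne_zero (by norm_num : (2:ℝ≥0∞) ≠ ⊤)]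
  rw [← ENNReal.rpow_natCast _ 2, ← ENNReal.rpow_mul]
  norm_num
  exact lintegral_congr fun x => (ennnorm_sq (u x)).symm

lemma ennreal_sq_le {x y : ℝ≥0∞} (h : x^2 ≤ y^2) : x ≤ y := by
  calc x = (x^2)^(1/2:ℝ) := by
        rw [← ENNReal.rpow_natCast x 2, ← ENNReal.rpow_mul]; norm_num
    _ ≤ (y^2)^(1/2:ℝ) := ENNReal.rpow_le_rpow h (by norm_num)
    _ = y := by rw [← ENNReal.rpow_natCast y 2, ← ENNReal.rpow_mul]; norm_num

/-- A family of functions bounded in `L²(Ω)` and with uniformly bounded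
Gagliardo seminorm is totally bounded in `L²(Ω)` (hence precompact). -/
theorem padic_sobolev_totally_bounded (p : ℕ) [Fact p.Prime] (n : ℕ) (hn : 1 ≤ n)
    (α : ℝ) (hα : 0 < α) (N : ℤ)
    (F : Set ((Fin n → ℚ_[p]) → ℝ))
    (hFmeas : ∀ f ∈ F, Measurable f)
    (hFL2 : ∃ C : ℝ, ∀ f ∈ F,
      (∫⁻ x in Bball p n N, ENNReal.ofReal ((f x) ^ 2) ∂padicHaarN p n)
        ≤ ENNReal.ofReal C)
    (hFgag : ∃ C : ℝ, ∀ f ∈ F,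
      (∫⁻ z in (Bball p n N) ×ˢ (Bball p n N),
          ENNReal.ofReal ((f z.1 - f z.2) ^ 2 / ‖z.1 - z.2‖ ^ ((n : ℝ) + α))
          ∂((padicHaarN p n).prod (padicHaarN p n)))
        ≤ ENNReal.ofReal C) :
    ∀ ε : ℝ, 0 < ε → ∃ (M : ℕ) (β : Fin M → ((Fin n → ℚ_[p]) → ℝ)),
      (∀ j, Measurable (β j) ∧
        (∫⁻ x in Bball p n N, ENNReal.ofReal ((β j x) ^ 2) ∂padicHaarN p n) < ⊤) ∧
      ∀ f ∈ F, ∃ j,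
        (∫⁻ x in Bball p n N, ENNReal.ofReal ((f x - β j x) ^ 2) ∂padicHaarN p n)
          ≤ ENNReal.ofReal (ε ^ 2) := by
  classical
  intro ε hε
  obtain ⟨C2, hC2⟩ := hFL2
  obtain ⟨Cg, hCg⟩ := hFgag
  set μ := padicHaarN p n with hμdef
  set Ω := Bball p n N with hΩdef
  have hΩmeas : MeasurableSet Ω := Bball_meas p n N
  have hΩfin : μ Ω < ⊤ := Bball_lt_top p n N
  have hppos : (0:ℝ) < p := by exact_mod_cast (Fact.out : p.Prime).pos
  have hp1 : (1:ℝ) < p := by exact_mod_cast (Fact.out : p.Prime).one_lt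
  set C2' : ℝ := max C2 0 with hC2'def
  set Cg' : ℝ := max Cg 0 with hCg'def
  have hC2'0 : 0 ≤ C2' := le_max_right _ _
  have hCg'0 : 0 ≤ Cg' := le_max_right _ _
  have hC2' : ∀ f ∈ F,
      (∫⁻ x in Ω, ENNReal.ofReal ((f x) ^ 2) ∂μ) ≤ ENNReal.ofReal C2' :=
    fun f hf => (hC2 f hf).trans (ENNReal.ofReal_le_ofReal (le_max_left _ _))
  have hCg' : ∀ f ∈ F,
      (∫⁻ z in Ω ×ˢ Ω,
          ENNReal.ofReal ((f z.1 - f z.2) ^ 2 / ‖z.1 - z.2‖ ^ ((n : ℝ) + α))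
          ∂(μ.prod μ)) ≤ ENNReal.ofReal Cg' :=
    fun f hf => (hCg f hf).trans (ENNReal.ofReal_le_ofReal (le_max_left _ _))
  set ε2 : ℝ := ε / 2 with hε2def
  have hε2 : 0 < ε2 := by positivity
  -- choice of the scale m
  set c : ℝ := (p:ℝ) ^ (-α) with hcdef
  have hc0 : 0 < c := Real.rpow_pos_of_pos hppos _
  have hc1 : c < 1 := Real.rpow_lt_one_of_one_lt_of_neg hp1 (neg_neg_iff_pos.mpr hα)
  have htar : 0 < ε2^2 / (Cg' + 1) := by positivity
  obtain ⟨m0, hm0⟩ := exists_pow_lt_of_lt_one htar hc1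
  set m : ℕ := max m0 (-N).toNat with hmdef
  have hmN : -(m:ℤ) ≤ N := by
    have h1 : (-N) ≤ ((-N).toNat : ℤ) := Int.self_le_toNat _
    have h2 : ((-N).toNat : ℤ) ≤ (m:ℤ) := by exact_mod_cast le_max_right m0 (-N).toNat
    omega
  have hcm : c^m ≤ c^m0 := pow_le_pow_of_le_one hc0.le hc1.le (le_max_left _ _)
  set r : ℝ := (p:ℝ)^(-(m:ℤ)) with hrdef
  have hr0 : 0 < r := zpow_pos hppos _
  set VB : ℝ≥0∞ := μ (closedBall (0:Fin n → ℚ_[p]) r) with hVBdef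
  have hV0 : VB ≠ 0 := Vm_ne_zero p n m
  have hVt : VB ≠ ⊤ := Vm_ne_top p n m
  set V : ℝ := VB.toReal with hVdef
  have hVpos : 0 < V := Vm_pos p n m
  -- smallness of the main constant
  have hreal : (p:ℝ)^(m*n) * r^((n:ℝ)+α) * Cg' ≤ ε2^2 := by
    have hrw : (p:ℝ)^(m*n) * r^((n:ℝ)+α) = c^m := by
      rw [hrdef, hcdef]
      rw [← Real.rpow_intCast (p:ℝ) (-(m:ℤ)), ← Real.rpow_natCast (p:ℝ) (m*n),
        ← Real.rpow_mul hppos.le, ← Real.rpow_add hppos,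
        ← Real.rpow_natCast ((p:ℝ) ^ (-α)) m, ← Real.rpow_mul hppos.le]
      congr 1
      push_cast
      ring
    rw [hrw]
    have h1 : c^m * Cg' ≤ (ε2^2/(Cg'+1)) * Cg' := by
      apply mul_le_mul_of_nonneg_right (hcm.trans hm0.le) hCg'0
    refine h1.trans ?_
    rw [div_mul_eq_mul_div, div_le_iff₀ (by positivity)]
    nlinarith [sq_nonneg ε2]
  have hsmall : VB⁻¹ * ENNReal.ofReal (r^((n:ℝ)+α)) * ENNReal.ofReal Cg'
      ≤ ENNReal.ofReal (ε2^2) := by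
    have hinv : VB⁻¹ ≤ (p:ℝ≥0∞)^(m*n) := by
      have := padicHaarN_small_ball_lb p n m
      calc VB⁻¹ ≤ (((p:ℝ≥0∞)^(m*n))⁻¹)⁻¹ := ENNReal.inv_le_inv.mpr this
        _ = (p:ℝ≥0∞)^(m*n) := inv_inv _
    have hppow : ((p:ℝ≥0∞)^(m*n)) = ENNReal.ofReal ((p:ℝ)^(m*n)) := by
      rw [ENNReal.ofReal_pow hppos.le]
      congr 1
      exact (ENNReal.ofReal_natCast p).symm
    calc VB⁻¹ * ENNReal.ofReal (r^((n:ℝ)+α)) * ENNReal.ofReal Cg'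
        ≤ (p:ℝ≥0∞)^(m*n) * ENNReal.ofReal (r^((n:ℝ)+α)) * ENNReal.ofReal Cg' := by
          gcongr
      _ = ENNReal.ofReal ((p:ℝ)^(m*n) * r^((n:ℝ)+α) * Cg') := by
          rw [hppow, ← ENNReal.ofReal_mul (by positivity), ← ENNReal.ofReal_mul (by positivity)]
      _ ≤ ENNReal.ofReal (ε2^2) := ENNReal.ofReal_le_ofReal hreal
  -- net and covering data
  set R : ℝ := V⁻¹ * Real.sqrt (C2' * V) with hRdef
  have hR0 : 0 ≤ R := by positivity
  set W : ℝ := (μ Ω).toReal with hWdef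
  have hW0 : 0 ≤ W := ENNReal.toReal_nonneg
  have hΩW : μ Ω = ENNReal.ofReal W := (ENNReal.ofReal_toReal hΩfin.ne).symm
  have hsq1 : (0:ℝ) < Real.sqrt (W + 1) := Real.sqrt_pos.mpr (by linarith)
  set δ : ℝ := ε2 / Real.sqrt (W + 1) with hδdef
  have hδ : 0 < δ := by positivity
  obtain ⟨L, v, hvnet⟩ := real_net R δ hR0 hδ
  have hδW : δ^2 * W ≤ ε2^2 := by
    have hs : Real.sqrt (W+1)^2 = W + 1 := Real.sq_sqrt (by linarith)
    rw [hδdef, div_pow, hs, div_mul_eq_mul_div, div_le_iff₀ (by linarith)]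
    nlinarith [sq_nonneg ε2]
  have hΩcomp : IsCompact Ω := by rw [hΩdef, Bball_eq]; exact isCompact_closedBall _ _
  obtain ⟨s, hssub, hsfin, hscov⟩ := hΩcomp.elim_finite_subcover_image
    (fun z (_ : z ∈ Ω) => IsUltrametricDist.isOpen_closedBall z hr0.ne')
    (fun x hx => Set.mem_biUnion hx (mem_closedBall_self hr0.le))
  set K : ℕ := hsfin.toFinset.card with hKdef
  set cf : Fin K → (Fin n → ℚ_[p]) :=
    fun i => ((hsfin.toFinset.equivFin.symm i : hsfin.toFinset) : _) with hcfdef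
  have hcfΩ : ∀ i, cf i ∈ Ω :=
    fun i => hssub (hsfin.mem_toFinset.mp (hsfin.toFinset.equivFin.symm i).2)
  have hcov : ∀ x ∈ Ω, ∃ i : Fin K, x ∈ closedBall (cf i) r := by
    intro x hx
    obtain ⟨z, hz, hxz⟩ := Set.mem_iUnion₂.mp (hscov hx)
    refine ⟨hsfin.toFinset.equivFin ⟨z, hsfin.mem_toFinset.mpr hz⟩, ?_⟩
    simpa [hcfdef, Equiv.symm_apply_apply] using hxz
  set D : Fin K → Set (Fin n → ℚ_[p]) :=
    fun i => closedBall (cf i) r \ ⋃ (j : Fin K) (_ : j < i), closedBall (cf j) r with hDdef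
  have hDmeas : ∀ i, MeasurableSet (D i) := fun i =>
    measurableSet_closedBall.diff
      (MeasurableSet.iUnion fun j => MeasurableSet.iUnion fun _ => measurableSet_closedBall)
  have hDsub : ∀ i, D i ⊆ closedBall (cf i) r := fun i => Set.diff_subset
  have hDuniq : ∀ x (i j : Fin K), x ∈ D i → x ∈ D j → i = j := by
    intro x i j hi hj
    by_contra hne
    rcases lt_or_gt_of_ne hne with h | h
    · exact hj.2 (Set.mem_iUnion.mpr ⟨i, Set.mem_iUnion.mpr ⟨h, hDsub i hi⟩⟩)
    · exact hi.2 (Set.mem_iUnion.mpr ⟨j, Set.mem_iUnion.mpr ⟨h, hDsub j hj⟩⟩)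
  have hDcov : ∀ x ∈ Ω, ∃ i : Fin K, x ∈ D i := by
    intro x hx
    have hTne : (Finset.univ.filter (fun i => x ∈ closedBall (cf i) r)).Nonempty := by
      obtain ⟨i, hi⟩ := hcov x hx
      exact ⟨i, by simpa using hi⟩
    set T := Finset.univ.filter (fun i => x ∈ closedBall (cf i) r) with hTdef
    set i0 := T.min' hTne with hi0def
    have hi0T : i0 ∈ T := T.min'_mem hTne
    refine ⟨i0, ?_, ?_⟩
    · simpa [hTdef] using hi0T
    · intro hmem
      obtain ⟨j, hj⟩ := Set.mem_iUnion.mp hmem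
      obtain ⟨hjlt, hjcb⟩ := Set.mem_iUnion.mp hj
      exact absurd (T.min'_le j (by simpa [hTdef] using hjcb)) (not_le.mpr hjlt)
  set bfun : (Fin K → Fin L) → (Fin n → ℚ_[p]) → ℝ :=
    fun σ x => ∑ i : Fin K, Set.indicator (D i) (fun _ => v (σ i)) x with hbdef
  have hbmeas : ∀ σ, Measurable (bfun σ) := by
    intro σ
    apply Finset.measurable_sum
    intro i _
    exact measurable_const.indicator (hDmeas i)
  have hbval : ∀ σ x (i : Fin K), x ∈ D i → bfun σ x = v (σ i) := by
    intro σ x i hxD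
    rw [hbdef]
    simp only
    rw [Finset.sum_eq_single i]
    · rw [Set.indicator_of_mem hxD]
    · intro j _ hji
      exact Set.indicator_of_notMem (fun hxj => hji (hDuniq x j i hxj hxD)) _
    · intro h
      exact absurd (Finset.mem_univ i) h
  have hbabs : ∀ σ x, |bfun σ x| ≤ ∑ i : Fin K, |v (σ i)| := by
    intro σ x
    refine (Finset.abs_sum_le_sum_abs _ _).trans (Finset.sum_le_sum fun i _ => ?_)
    by_cases hxD : x ∈ D i
    · rw [Set.indicator_of_mem hxD]
    · rw [Set.indicator_of_notMem hxD, abs_zero]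
      exact abs_nonneg _
  set M : ℕ := Fintype.card (Fin K → Fin L) with hMdef
  set e : (Fin K → Fin L) ≃ Fin M := Fintype.equivFin _ with hedef
  refine ⟨M, fun j => bfun (e.symm j), ?_, ?_⟩
  · intro j
    refine ⟨hbmeas _, ?_⟩
    set Bj : ℝ := ∑ i : Fin K, |v (e.symm j i)| with hBjdef
    have hBj0 : 0 ≤ Bj := Finset.sum_nonneg fun i _ => abs_nonneg _
    calc ∫⁻ x in Ω, ENNReal.ofReal ((bfun (e.symm j) x)^2) ∂μ
        ≤ ∫⁻ _x in Ω, ENNReal.ofReal (Bj^2) ∂μ := by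
          apply lintegral_mono
          intro x
          apply ENNReal.ofReal_le_ofReal
          have h := abs_le.mp (hbabs (e.symm j) x)
          exact sq_le_sq' (by linarith) (by linarith)
      _ = ENNReal.ofReal (Bj^2) * μ Ω := setLIntegral_const _ _
      _ < ⊤ := ENNReal.mul_lt_top ENNReal.ofReal_lt_top hΩfin
  · intro f hfF
    have hfm : Measurable f := hFmeas f hfF
    have hQf : ∫⁻ x in Ω, ENNReal.ofReal ((f x)^2) ∂μ ≤ ENNReal.ofReal C2' := hC2' f hfF
    have hGf := hCg' f hfF
    have hMem : MemLp f 2 (μ.restrict Ω) := by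
      refine ⟨hfm.aestronglyMeasurable, ?_⟩
      have h1 : eLpNorm f 2 (μ.restrict Ω) ≤ ENNReal.ofReal (Real.sqrt C2') := by
        apply ennreal_sq_le
        calc (eLpNorm f 2 (μ.restrict Ω))^2 = ∫⁻ x in Ω, ENNReal.ofReal ((f x)^2) ∂μ :=
              (lintegral_sq_eq _ _).symm
          _ ≤ ENNReal.ofReal C2' := hQf
          _ = (ENNReal.ofReal (Real.sqrt C2'))^2 := by
              rw [← ENNReal.ofReal_pow (Real.sqrt_nonneg _), Real.sq_sqrt hC2'0]
      exact h1.trans_lt ENNReal.ofReal_lt_top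
    have hint : ∀ x ∈ Ω, IntegrableOn f (closedBall x r) μ := by
      intro x hx
      have hsub : closedBall x r ⊆ Ω := cb_subset_Bball p n N m hmN x hx
      have hMem2 : MemLp f 2 (μ.restrict (closedBall x r)) :=
        hMem.mono_measure (Measure.restrict_mono hsub le_rfl)
      haveI : IsFiniteMeasure (μ.restrict (closedBall x r)) := by
        constructor
        rw [Measure.restrict_apply_univ, padicHaarN_cb_translate]
        exact hVt.lt_top
      exact hMem2.integrable (by norm_num)
    have hA := avg_L2_bound p n N m hmN α hα f hfm hint
    have hQ1 : ∫⁻ x in Ω, ENNReal.ofReal ((f x - avgOp p n m f x)^2) ∂μ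
        ≤ ENNReal.ofReal (ε2^2) :=
      hA.trans ((mul_le_mul_right hGf _).trans hsmall)
    have heL1 : eLpNorm (fun x => f x - avgOp p n m f x) 2 (μ.restrict Ω)
        ≤ ENNReal.ofReal ε2 := by
      apply ennreal_sq_le
      calc (eLpNorm (fun x => f x - avgOp p n m f x) 2 (μ.restrict Ω))^2
          = ∫⁻ x in Ω, ENNReal.ofReal ((f x - avgOp p n m f x)^2) ∂μ :=
            (lintegral_sq_eq _ _).symm
        _ ≤ ENNReal.ofReal (ε2^2) := hQ1
        _ = (ENNReal.ofReal ε2)^2 := ENNReal.ofReal_pow hε2.le 2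
    have hcb2 : ∀ i : Fin K,
        ∫⁻ y in closedBall (cf i) r, ENNReal.ofReal ((f y)^2) ∂μ ≤ ENNReal.ofReal C2' :=
      fun i => (lintegral_mono_set (cb_subset_Bball p n N m hmN (cf i) (hcfΩ i))).trans hQf
    have hRc : ∀ i : Fin K, |avgOp p n m f (cf i)| ≤ R :=
      fun i => avg_abs_le p n m f hfm C2' hC2'0 (cf i) (hcb2 i)
    set σ : Fin K → Fin L := fun i => (hvnet (avgOp p n m f (cf i)) (hRc i)).choose with hσdef
    have hσspec : ∀ i, |avgOp p n m f (cf i) - v (σ i)| ≤ δ :=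
      fun i => (hvnet _ (hRc i)).choose_spec
    refine ⟨e σ, ?_⟩
    simp only [Equiv.symm_apply_apply]
    have hmid : ∀ x ∈ Ω, |avgOp p n m f x - bfun σ x| ≤ δ := by
      intro x hx
      obtain ⟨i, hxD⟩ := hDcov x hx
      have hxcb := hDsub i hxD
      have havg : avgOp p n m f x = avgOp p n m f (cf i) :=
        avg_locally_const p n m f x (cf i) (by rwa [mem_closedBall] at hxcb)
      rw [havg, hbval σ x i hxD]
      exact hσspec i
    have hQ2 : ∫⁻ x in Ω, ENNReal.ofReal ((avgOp p n m f x - bfun σ x)^2) ∂μ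
        ≤ ENNReal.ofReal (ε2^2) := by
      calc ∫⁻ x in Ω, ENNReal.ofReal ((avgOp p n m f x - bfun σ x)^2) ∂μ
          ≤ ∫⁻ _x in Ω, ENNReal.ofReal (δ^2) ∂μ := by
            rw [← lintegral_indicator hΩmeas, ← lintegral_indicator hΩmeas]
            apply lintegral_mono
            intro x
            by_cases hx : x ∈ Ω
            · rw [Set.indicator_of_mem hx, Set.indicator_of_mem hx]
              apply ENNReal.ofReal_le_ofReal
              have h := abs_le.mp (hmid x hx)
              exact sq_le_sq' (by linarith) (by linarith)
            · rw [Set.indicator_of_notMem hx, Set.indicator_of_notMem hx]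
        _ = ENNReal.ofReal (δ^2) * μ Ω := setLIntegral_const _ _
        _ = ENNReal.ofReal (δ^2 * W) := by
            rw [hΩW, ← ENNReal.ofReal_mul (by positivity)]
        _ ≤ ENNReal.ofReal (ε2^2) := ENNReal.ofReal_le_ofReal hδW
    have heL2 : eLpNorm (fun x => avgOp p n m f x - bfun σ x) 2 (μ.restrict Ω)
        ≤ ENNReal.ofReal ε2 := by
      apply ennreal_sq_le
      calc (eLpNorm (fun x => avgOp p n m f x - bfun σ x) 2 (μ.restrict Ω))^2
          = ∫⁻ x in Ω, ENNReal.ofReal ((avgOp p n m f x - bfun σ x)^2) ∂μ :=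
            (lintegral_sq_eq _ _).symm
        _ ≤ ENNReal.ofReal (ε2^2) := hQ2
        _ = (ENNReal.ofReal ε2)^2 := ENNReal.ofReal_pow hε2.le 2
    have htri : eLpNorm (fun x => f x - bfun σ x) 2 (μ.restrict Ω) ≤ ENNReal.ofReal ε := by
      have hsplit : (fun x => f x - bfun σ x)
          = (fun x => f x - avgOp p n m f x) + (fun x => avgOp p n m f x - bfun σ x) := by
        funext x
        simp only [Pi.add_apply]
        ring
      rw [hsplit]
      refine (eLpNorm_add_le
        ((hfm.sub (avg_continuous p n m f).measurable).aestronglyMeasurable)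
        (((avg_continuous p n m f).measurable.sub (hbmeas σ)).aestronglyMeasurable)
        (by norm_num)).trans ?_
      calc eLpNorm (fun x => f x - avgOp p n m f x) 2 (μ.restrict Ω)
            + eLpNorm (fun x => avgOp p n m f x - bfun σ x) 2 (μ.restrict Ω)
          ≤ ENNReal.ofReal ε2 + ENNReal.ofReal ε2 := add_le_add heL1 heL2
        _ = ENNReal.ofReal ε := by
            rw [← ENNReal.ofReal_add hε2.le hε2.le]
            congr 1
            rw [hε2def]
            ring
    calc ∫⁻ x in Ω, ENNReal.ofReal ((f x - bfun σ x)^2) ∂μ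
        = (eLpNorm (fun x => f x - bfun σ x) 2 (μ.restrict Ω))^2 := lintegral_sq_eq _ _
      _ ≤ (ENNReal.ofReal ε)^2 := pow_le_pow_left' htri 2
      _ = ENNReal.ofReal (ε^2) := (ENNReal.ofReal_pow hε.le 2).symm
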